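/- Subadditivity of the sampling overhead under tensor products: if (c₁, c₂, N₁, N₂) is a feasible quasiprobability recovery for ρ_ABC and (ĉ₁, ĉ₂, N̂₁, N̂₂) one for σ_{A'B'C'}, then setting c̃₁ = c₁ĉ₁ + c₂ĉ₂, c̃₂ = c₁ĉ₂ + c₂ĉ₁ and Ñ₁ = (c₁ĉ₁ N₁⊗N̂₁ + c₂ĉ₂ N₂⊗N̂₂)/c̃₁, Ñ₂ = (c₁ĉ₂ N₁⊗N̂₂ + c₂ĉ₁ N₂⊗N̂₁)/c̃₂ gives a feasible recovery for ρ⊗σ with overhead c̃₁ + c̃₂ = (c₁+c₂)(ĉ₁+ĉ₂); in particular 2^{ν(ρ⊗σ)} ≤ 2^{ν(ρ)}·2^{ν(σ)}. -/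

import Mathlib

open Matrix BigOperators
open scoped ComplexOrder

/-- The block `Q_BC^(ij) = ⟨i|_A ρ_ABC |j⟩_A` of a tripartite operator. -/
noncomputable def QBC {A B C : Type*} [Fintype A] [Fintype B] [Fintype C]
    (ρ : Matrix (A × B × C) (A × B × C) ℂ) (i j : A) : Matrix (B × C) (B × C) ℂ :=
  Matrix.of fun bc bc' => ρ (i, bc.1, bc.2) (j, bc'.1, bc'.2)

/-- The block `Q_B^(ij) = ⟨i|_A (tr_C ρ_ABC) |j⟩_A`. -/
noncomputable def QB {A B C : Type*} [Fintype A] [Fintype B] [Fintype C]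
    (ρ : Matrix (A × B × C) (A × B × C) ℂ) (i j : A) : Matrix B B ℂ :=
  Matrix.of fun b b' => ∑ c : C, ρ (i, b, c) (j, b', c)

/-- Complete positivity via the Choi matrix, together with linearity and trace
preservation: a CPTP map from system `B` to `B ⊗ C`. -/
def IsCPTP {B C : Type*} [Fintype B] [Fintype C] [DecidableEq B]
    (N : Matrix B B ℂ → Matrix (B × C) (B × C) ℂ) : Prop :=
  IsLinearMap ℂ N ∧
  Matrix.PosSemidef (Matrix.of fun p q : B × (B × C) =>
    N (Matrix.single p.1 q.1 1) p.2 q.2) ∧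
  ∀ M, (N M).trace = M.trace

/-- The set of achievable overheads `c₁ + c₂` of quasiprobability decompositions
`(id_A ⊗ (c₁N₁ - c₂N₂))(tr_C ρ_ABC) = ρ_ABC` with `N₁, N₂` CPTP. -/
def overheadSet {A B C : Type*} [Fintype A] [Fintype B] [Fintype C] [DecidableEq B]
    (ρ : Matrix (A × B × C) (A × B × C) ℂ) : Set ℝ :=
  {s | ∃ c₁ c₂ : ℝ, ∃ N₁ N₂ : Matrix B B ℂ → Matrix (B × C) (B × C) ℂ,
      0 ≤ c₁ ∧ 0 ≤ c₂ ∧ IsCPTP N₁ ∧ IsCPTP N₂ ∧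
      (∀ i j, (c₁ : ℂ) • N₁ (QB ρ i j) - (c₂ : ℂ) • N₂ (QB ρ i j) = QBC ρ i j) ∧
      s = c₁ + c₂}

/-- `2^{ν(ρ)}`: the optimal sampling overhead of virtual recovery. -/
noncomputable def overhead {A B C : Type*} [Fintype A] [Fintype B] [Fintype C]
    [DecidableEq B] (ρ : Matrix (A × B × C) (A × B × C) ℂ) : ℝ :=
  sInf (overheadSet ρ)

/-- `ν(ρ) = log₂` of the optimal sampling overhead. -/
noncomputable def nu {A B C : Type*} [Fintype A] [Fintype B] [Fintype C] [DecidableEq B]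
    (ρ : Matrix (A × B × C) (A × B × C) ℂ) : ℝ :=
  Real.logb 2 (overhead ρ)

/-- The tensor product `ρ ⊗ σ` of two tripartite states, viewed as a tripartite state
with parts `A A'`, `B B'`, `C C'`. -/
noncomputable def tensState {A B C A' B' C' : Type*}
    (ρ : Matrix (A × B × C) (A × B × C) ℂ) (σ : Matrix (A' × B' × C') (A' × B' × C') ℂ) :
    Matrix ((A × A') × (B × B') × (C × C')) ((A × A') × (B × B') × (C × C')) ℂ :=
  Matrix.of fun x y =>
    ρ (x.1.1, x.2.1.1, x.2.2.1) (y.1.1, y.2.1.1, y.2.2.1) *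
    σ (x.1.2, x.2.1.2, x.2.2.2) (y.1.2, y.2.1.2, y.2.2.2)

/-- The tensor product `N ⊗ N'` of two maps, as a map from system `B B'` to
`(B B') ⊗ (C C')`. -/
noncomputable def tensMap {B C B' C' : Type*} [Fintype B] [Fintype B'] [DecidableEq B]
    [DecidableEq B']
    (N : Matrix B B ℂ → Matrix (B × C) (B × C) ℂ)
    (N' : Matrix B' B' ℂ → Matrix (B' × C') (B' × C') ℂ)
    (M : Matrix (B × B') (B × B') ℂ) :
    Matrix ((B × B') × (C × C')) ((B × B') × (C × C')) ℂ :=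
  Matrix.of fun x y => ∑ p : (B × B') × (B × B'),
    M p.1 p.2 * N (Matrix.single p.1.1 p.2.1 1) (x.1.1, x.2.1) (y.1.1, y.2.1) *
      N' (Matrix.single p.1.2 p.2.2 1) (x.1.2, x.2.2) (y.1.2, y.2.2)

/-! Tensoring the two decompositions gives
`(c₁N₁ - c₂N₂) ⊗ (ĉ₁N̂₁ - ĉ₂N̂₂) = (c₁ĉ₁ N₁⊗N̂₁ + c₂ĉ₂ N₂⊗N̂₂) - (c₁ĉ₂ N₁⊗N̂₂ + c₂ĉ₁ N₂⊗N̂₁)`,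
and this recovers `ρ ⊗ σ` because the blocks of `ρ ⊗ σ` and of its partial trace are Kronecker
products of the blocks of the factors. Each bracket is a nonnegative multiple of a convex
combination of tensor products of CPTP maps, and `N ⊗ N'` is CPTP since its Choi matrix is a
reindexed Kronecker product of Choi matrices. So every product of achievable overheads of `ρ` and
`σ` is achievable for `ρ ⊗ σ`, and taking infima gives submultiplicativity. -/

open scoped Kronecker

theorem IsLinearMap.map_eq_sum_single {R M m n : Type*} [CommSemiring R] [AddCommMonoid M]
    [Module R M] [Fintype m] [Fintype n] [DecidableEq m] [DecidableEq n]
    {f : Matrix m n R → M} (hf : IsLinearMap R f) (X : Matrix m n R) :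
    f X = ∑ p : m × n, X p.1 p.2 • f (Matrix.single p.1 p.2 1) := by
  let F := IsLinearMap.mk' f hf
  conv_lhs => rw [Matrix.matrix_eq_sum_single X, ← Finset.sum_product']
  refine (map_sum F _ _).trans (Finset.sum_congr rfl fun p _ => ?_)
  rw [show Matrix.single p.1 p.2 (X p.1 p.2) = X p.1 p.2 • Matrix.single p.1 p.2 1 by
    rw [Matrix.smul_single, smul_eq_mul, mul_one]]
  exact F.map_smul _ _

theorem Matrix.trace_submatrix_equiv {R m n : Type*} [AddCommMonoid R] [Fintype m] [Fintype n]
    (A : Matrix n n R) (e : m ≃ n) : (A.submatrix e e).trace = A.trace :=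
  e.sum_comp fun i => A i i

def choi {B C : Type*} [DecidableEq B] (N : Matrix B B ℂ → Matrix (B × C) (B × C) ℂ) :
    Matrix (B × B × C) (B × B × C) ℂ :=
  Matrix.of fun p q => N (Matrix.single p.1 q.1 1) p.2 q.2

section Channels

variable {B C B' C' : Type*} [Fintype B] [Fintype B'] [DecidableEq B] [DecidableEq B']

theorem tensMap_isLinearMap (N : Matrix B B ℂ → Matrix (B × C) (B × C) ℂ)
    (N' : Matrix B' B' ℂ → Matrix (B' × C') (B' × C') ℂ) :
    IsLinearMap ℂ (tensMap N N') := by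
  constructor <;> intros <;> ext <;>
    simp [tensMap, add_mul, Finset.sum_add_distrib, Finset.mul_sum, mul_assoc]

theorem tensMap_kronecker {N : Matrix B B ℂ → Matrix (B × C) (B × C) ℂ}
    {N' : Matrix B' B' ℂ → Matrix (B' × C') (B' × C') ℂ}
    (hN : IsLinearMap ℂ N) (hN' : IsLinearMap ℂ N') (X : Matrix B B ℂ) (Y : Matrix B' B' ℂ) :
    tensMap N N' (X ⊗ₖ Y) =
      (N X ⊗ₖ N' Y).submatrix (Equiv.prodProdProdComm B B' C C')
        (Equiv.prodProdProdComm B B' C C') := by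
  ext x y
  rw [hN.map_eq_sum_single, hN'.map_eq_sum_single]
  simp only [tensMap, Matrix.of_apply, Matrix.submatrix_apply, Matrix.kroneckerMap_apply,
    Matrix.sum_apply, Matrix.smul_apply, smul_eq_mul, Finset.sum_mul_sum,
    ← Finset.sum_product', Finset.univ_product_univ]
  refine Fintype.sum_equiv (Equiv.prodProdProdComm B B' B B') _ _ fun p => ?_
  simp only [Equiv.prodProdProdComm_apply]
  ring

theorem trace_tensMap [Fintype C] [Fintype C'] {N : Matrix B B ℂ → Matrix (B × C) (B × C) ℂ}
    {N' : Matrix B' B' ℂ → Matrix (B' × C') (B' × C') ℂ}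
    (hN : IsLinearMap ℂ N) (hN' : IsLinearMap ℂ N')
    (htr : ∀ M, (N M).trace = M.trace) (htr' : ∀ M, (N' M).trace = M.trace)
    (M : Matrix (B × B') (B × B') ℂ) :
    (tensMap N N' M).trace = M.trace := by
  have hlin := tensMap_isLinearMap N N'
  induction M using Matrix.induction_on' with
  | h_zero => rw [hlin.map_zero, Matrix.trace_zero, Matrix.trace_zero]
  | h_add P Q hP hQ => rw [hlin.map_add, Matrix.trace_add, Matrix.trace_add, hP, hQ]
  | h_std_basis i j c =>
    have hsingle : Matrix.single i j c = Matrix.single i.1 j.1 c ⊗ₖ Matrix.single i.2 j.2 1 := by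
      rw [Matrix.single_kronecker_single, mul_one]
    rw [hsingle, tensMap_kronecker hN hN', Matrix.trace_submatrix_equiv, Matrix.trace_kronecker,
      htr, htr', Matrix.trace_kronecker]

theorem choi_tensMap {N : Matrix B B ℂ → Matrix (B × C) (B × C) ℂ}
    {N' : Matrix B' B' ℂ → Matrix (B' × C') (B' × C') ℂ}
    (hN : IsLinearMap ℂ N) (hN' : IsLinearMap ℂ N') :
    choi (tensMap N N') = (choi N ⊗ₖ choi N').submatrix
      (fun z => ((z.1.1, z.2.1.1, z.2.2.1), (z.1.2, z.2.1.2, z.2.2.2)))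
      (fun z => ((z.1.1, z.2.1.1, z.2.2.1), (z.1.2, z.2.1.2, z.2.2.2))) := by
  ext p q
  rw [choi, Matrix.of_apply, ← one_mul (1 : ℂ), ← Matrix.single_kronecker_single,
    tensMap_kronecker hN hN']
  rfl

theorem IsCPTP.tensMap [Fintype C] [Fintype C'] {N : Matrix B B ℂ → Matrix (B × C) (B × C) ℂ}
    {N' : Matrix B' B' ℂ → Matrix (B' × C') (B' × C') ℂ}
    (hN : IsCPTP N) (hN' : IsCPTP N') : IsCPTP (tensMap N N') :=
  ⟨tensMap_isLinearMap N N', by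
    rw [← choi, choi_tensMap hN.1 hN'.1]; exact (hN.2.1.kronecker hN'.2.1).submatrix _,
    trace_tensMap hN.1 hN'.1 hN.2.2 hN'.2.2⟩

end Channels

theorem add_smul_div_add_smul_div {M : Type*} [AddCommGroup M] [Module ℂ M] {r s : ℝ}
    (hr : 0 ≤ r) (hs : 0 ≤ s) (X Y : M) :
    ((r + s : ℝ) : ℂ) • (((r / (r + s) : ℝ) : ℂ) • X + ((s / (r + s) : ℝ) : ℂ) • Y) =
      (r : ℂ) • X + (s : ℂ) • Y := by
  rcases (add_nonneg hr hs).eq_or_lt with hrs | hrs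
  · obtain ⟨rfl, rfl⟩ := (add_eq_zero_iff_of_nonneg hr hs).mp hrs.symm
    simp
  · rw [smul_add, smul_smul, smul_smul, ← Complex.ofReal_mul, ← Complex.ofReal_mul,
      mul_div_cancel₀ _ hrs.ne', mul_div_cancel₀ _ hrs.ne']

section Convexity

variable {B C : Type*} [Fintype B] [Fintype C] [DecidableEq B]
  {F G : Matrix B B ℂ → Matrix (B × C) (B × C) ℂ}

theorem IsCPTP.convexComb (hF : IsCPTP F) (hG : IsCPTP G) {a b : ℝ} (ha : 0 ≤ a) (hb : 0 ≤ b)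
    (hab : a + b = 1) : IsCPTP (fun M => (a : ℂ) • F M + (b : ℂ) • G M) := by
  refine ⟨⟨fun M M' => ?_, fun c M => ?_⟩, ?_, fun M => ?_⟩
  · rw [hF.1.map_add, hG.1.map_add]
    module
  · rw [hF.1.map_smul, hG.1.map_smul]
    module
  · change ((a : ℂ) • choi F + (b : ℂ) • choi G).PosSemidef
    exact (hF.2.1.smul (Complex.zero_le_real.mpr ha)).add
      (hG.2.1.smul (Complex.zero_le_real.mpr hb))
  · rw [Matrix.trace_add, Matrix.trace_smul, Matrix.trace_smul, hF.2.2, hG.2.2, ← add_smul,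
      ← Complex.ofReal_add, hab, Complex.ofReal_one, one_smul]

theorem IsCPTP.normalizedComb (hF : IsCPTP F) (hG : IsCPTP G) {r s : ℝ} (hr : 0 ≤ r)
    (hs : 0 ≤ s) (hrs : r + s ≠ 0) :
    IsCPTP (fun M => ((r / (r + s) : ℝ) : ℂ) • F M + ((s / (r + s) : ℝ) : ℂ) • G M) :=
  hF.convexComb hG (div_nonneg hr (add_nonneg hr hs)) (div_nonneg hs (add_nonneg hr hs))
    (by rw [← add_div, div_self hrs])

theorem IsCPTP.exists_smul_eq_smul_add_smul (hF : IsCPTP F) (hG : IsCPTP G) {r s : ℝ}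
    (hr : 0 ≤ r) (hs : 0 ≤ s) :
    ∃ H, IsCPTP H ∧ ∀ M, ((r + s : ℝ) : ℂ) • H M = (r : ℂ) • F M + (s : ℂ) • G M := by
  by_cases hrs : r + s = 0
  · obtain ⟨rfl, rfl⟩ := (add_eq_zero_iff_of_nonneg hr hs).mp hrs
    exact ⟨F, hF, fun M => by simp⟩
  · exact ⟨_, hF.normalizedComb hG hr hs hrs, fun M => add_smul_div_add_smul_div hr hs _ _⟩

end Convexity

section TensorProduct

variable {A B C A' B' C' : Type*} [Fintype A] [Fintype B] [Fintype C]
  [Fintype A'] [Fintype B'] [Fintype C']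

theorem QB_tensState (ρ : Matrix (A × B × C) (A × B × C) ℂ)
    (σ : Matrix (A' × B' × C') (A' × B' × C') ℂ) (i j : A × A') :
    QB (tensState ρ σ) i j = QB ρ i.1 j.1 ⊗ₖ QB σ i.2 j.2 := by
  ext r s
  simp only [QB, tensState, Matrix.of_apply, Matrix.kroneckerMap_apply, Fintype.sum_prod_type,
    Finset.sum_mul_sum]

theorem QBC_tensState (ρ : Matrix (A × B × C) (A × B × C) ℂ)
    (σ : Matrix (A' × B' × C') (A' × B' × C') ℂ) (i j : A × A') :
    QBC (tensState ρ σ) i j = (QBC ρ i.1 j.1 ⊗ₖ QBC σ i.2 j.2).submatrix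
      (Equiv.prodProdProdComm B B' C C') (Equiv.prodProdProdComm B B' C C') :=
  rfl

theorem tensMap_recovery [DecidableEq B] [DecidableEq B']
    (ρ : Matrix (A × B × C) (A × B × C) ℂ)
    (σ : Matrix (A' × B' × C') (A' × B' × C') ℂ) {c₁ c₂ ch₁ ch₂ : ℝ}
    {N₁ N₂ : Matrix B B ℂ → Matrix (B × C) (B × C) ℂ}
    {Nh₁ Nh₂ : Matrix B' B' ℂ → Matrix (B' × C') (B' × C') ℂ}
    (hN₁ : IsLinearMap ℂ N₁) (hN₂ : IsLinearMap ℂ N₂)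
    (hNh₁ : IsLinearMap ℂ Nh₁) (hNh₂ : IsLinearMap ℂ Nh₂)
    (hrecρ : ∀ i j, (c₁ : ℂ) • N₁ (QB ρ i j) - (c₂ : ℂ) • N₂ (QB ρ i j) = QBC ρ i j)
    (hrecσ : ∀ i j, (ch₁ : ℂ) • Nh₁ (QB σ i j) - (ch₂ : ℂ) • Nh₂ (QB σ i j) = QBC σ i j)
    (i j : A × A') :
    ((c₁ * ch₁ : ℝ) : ℂ) • tensMap N₁ Nh₁ (QB (tensState ρ σ) i j) +
        ((c₂ * ch₂ : ℝ) : ℂ) • tensMap N₂ Nh₂ (QB (tensState ρ σ) i j) -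
      (((c₁ * ch₂ : ℝ) : ℂ) • tensMap N₁ Nh₂ (QB (tensState ρ σ) i j) +
        ((c₂ * ch₁ : ℝ) : ℂ) • tensMap N₂ Nh₁ (QB (tensState ρ σ) i j)) =
      QBC (tensState ρ σ) i j := by
  rw [QBC_tensState, ← hrecρ, ← hrecσ, QB_tensState, tensMap_kronecker hN₁ hNh₁,
    tensMap_kronecker hN₂ hNh₂, tensMap_kronecker hN₁ hNh₂, tensMap_kronecker hN₂ hNh₁]
  ext x y
  simp only [Matrix.add_apply, Matrix.sub_apply, Matrix.smul_apply, Matrix.submatrix_apply,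
    Matrix.kroneckerMap_apply, smul_eq_mul, Complex.ofReal_mul]
  ring

theorem overheadSet_nonneg [DecidableEq B] (ρ : Matrix (A × B × C) (A × B × C) ℂ) {s : ℝ}
    (hs : s ∈ overheadSet ρ) : 0 ≤ s := by
  obtain ⟨c₁, c₂, -, -, hc₁, hc₂, -, -, -, rfl⟩ := hs
  exact add_nonneg hc₁ hc₂

theorem mul_mem_overheadSet_tensState [DecidableEq B] [DecidableEq B']
    (ρ : Matrix (A × B × C) (A × B × C) ℂ) (σ : Matrix (A' × B' × C') (A' × B' × C') ℂ)
    {s t : ℝ} (hs : s ∈ overheadSet ρ) (ht : t ∈ overheadSet σ) :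
    s * t ∈ overheadSet (tensState ρ σ) := by
  obtain ⟨c₁, c₂, N₁, N₂, hc₁, hc₂, hN₁, hN₂, hrecρ, rfl⟩ := hs
  obtain ⟨ch₁, ch₂, Nh₁, Nh₂, hch₁, hch₂, hNh₁, hNh₂, hrecσ, rfl⟩ := ht
  obtain ⟨H₁, hH₁, hH₁eq⟩ := (hN₁.tensMap hNh₁).exists_smul_eq_smul_add_smul (hN₂.tensMap hNh₂)
    (mul_nonneg hc₁ hch₁) (mul_nonneg hc₂ hch₂)
  obtain ⟨H₂, hH₂, hH₂eq⟩ := (hN₁.tensMap hNh₂).exists_smul_eq_smul_add_smul (hN₂.tensMap hNh₁)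
    (mul_nonneg hc₁ hch₂) (mul_nonneg hc₂ hch₁)
  refine ⟨_, _, H₁, H₂, add_nonneg (mul_nonneg hc₁ hch₁) (mul_nonneg hc₂ hch₂),
    add_nonneg (mul_nonneg hc₁ hch₂) (mul_nonneg hc₂ hch₁), hH₁, hH₂, fun i j => ?_, by ring⟩
  rw [hH₁eq, hH₂eq]
  exact tensMap_recovery ρ σ hN₁.1 hN₂.1 hNh₁.1 hNh₂.1 hrecρ hrecσ i j

end TensorProduct

theorem Real.sInf_le_sInf_mul_sInf {S T U : Set ℝ} (hS : S.Nonempty) (hT : T.Nonempty)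
    (hS₀ : ∀ s ∈ S, 0 ≤ s) (hT₀ : ∀ t ∈ T, 0 ≤ t) (hU : BddBelow U)
    (hmul : ∀ s ∈ S, ∀ t ∈ T, s * t ∈ U) : sInf U ≤ sInf S * sInf T := by
  have := hS.to_subtype
  have := hT.to_subtype
  rw [sInf_eq_iInf' S, Real.iInf_mul_of_nonneg (Real.sInf_nonneg hT₀)]
  refine le_ciInf fun s => ?_
  rw [sInf_eq_iInf' T, Real.mul_iInf_of_nonneg (hS₀ s s.2)]
  exact le_ciInf fun t => csInf_le hU (hmul s s.2 t t.2)

/-- from feasible quasiprobability recoveries `(c₁, c₂, N₁, N₂)` for `ρ`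
and `(ĉ₁, ĉ₂, N̂₁, N̂₂)` for `σ`, the construction
`c̃₁ = c₁ĉ₁ + c₂ĉ₂`, `c̃₂ = c₁ĉ₂ + c₂ĉ₁`,
`Ñ₁ = (c₁ĉ₁ N₁⊗N̂₁ + c₂ĉ₂ N₂⊗N̂₂)/c̃₁`, `Ñ₂ = (c₁ĉ₂ N₁⊗N̂₂ + c₂ĉ₁ N₂⊗N̂₁)/c̃₂`
gives a feasible recovery for `ρ ⊗ σ` with overhead `c̃₁ + c̃₂ = (c₁+c₂)(ĉ₁+ĉ₂)`;
in particular the optimal sampling overhead is submultiplicative: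
`2^{ν(ρ⊗σ)} ≤ 2^{ν(ρ)} · 2^{ν(σ)}`. -/
theorem sampling_overhead_subadditive {A B C A' B' C' : Type*}
    [Fintype A] [Fintype B] [Fintype C] [DecidableEq B]
    [Fintype A'] [Fintype B'] [Fintype C'] [DecidableEq B']
    (ρ : Matrix (A × B × C) (A × B × C) ℂ) (σ : Matrix (A' × B' × C') (A' × B' × C') ℂ)
    (c₁ c₂ ch₁ ch₂ : ℝ)
    (N₁ N₂ : Matrix B B ℂ → Matrix (B × C) (B × C) ℂ)
    (Nh₁ Nh₂ : Matrix B' B' ℂ → Matrix (B' × C') (B' × C') ℂ)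
    (hc₁ : 0 ≤ c₁) (hc₂ : 0 ≤ c₂) (hch₁ : 0 ≤ ch₁) (hch₂ : 0 ≤ ch₂)
    (hN₁ : IsCPTP N₁) (hN₂ : IsCPTP N₂) (hNh₁ : IsCPTP Nh₁) (hNh₂ : IsCPTP Nh₂)
    (hrecρ : ∀ i j, (c₁ : ℂ) • N₁ (QB ρ i j) - (c₂ : ℂ) • N₂ (QB ρ i j) = QBC ρ i j)
    (hrecσ : ∀ i j, (ch₁ : ℂ) • Nh₁ (QB σ i j) - (ch₂ : ℂ) • Nh₂ (QB σ i j) = QBC σ i j) :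
    (c₁ * ch₁ + c₂ * ch₂) + (c₁ * ch₂ + c₂ * ch₁) = (c₁ + c₂) * (ch₁ + ch₂) ∧
    (∀ hc : c₁ * ch₁ + c₂ * ch₂ ≠ 0, ∀ hc' : c₁ * ch₂ + c₂ * ch₁ ≠ 0,
      IsCPTP (fun M => ((c₁ * ch₁ / (c₁ * ch₁ + c₂ * ch₂) : ℝ) : ℂ) • tensMap N₁ Nh₁ M +
          ((c₂ * ch₂ / (c₁ * ch₁ + c₂ * ch₂) : ℝ) : ℂ) • tensMap N₂ Nh₂ M) ∧
      IsCPTP (fun M => ((c₁ * ch₂ / (c₁ * ch₂ + c₂ * ch₁) : ℝ) : ℂ) • tensMap N₁ Nh₂ M +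
          ((c₂ * ch₁ / (c₁ * ch₂ + c₂ * ch₁) : ℝ) : ℂ) • tensMap N₂ Nh₁ M)) ∧
    (∀ i j, ((c₁ * ch₁ + c₂ * ch₂ : ℝ) : ℂ) •
        (((c₁ * ch₁ / (c₁ * ch₁ + c₂ * ch₂) : ℝ) : ℂ) • tensMap N₁ Nh₁ (QB (tensState ρ σ) i j) +
          ((c₂ * ch₂ / (c₁ * ch₁ + c₂ * ch₂) : ℝ) : ℂ) • tensMap N₂ Nh₂ (QB (tensState ρ σ) i j)) -
        ((c₁ * ch₂ + c₂ * ch₁ : ℝ) : ℂ) •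
        (((c₁ * ch₂ / (c₁ * ch₂ + c₂ * ch₁) : ℝ) : ℂ) • tensMap N₁ Nh₂ (QB (tensState ρ σ) i j) +
          ((c₂ * ch₁ / (c₁ * ch₂ + c₂ * ch₁) : ℝ) : ℂ) • tensMap N₂ Nh₁ (QB (tensState ρ σ) i j)) =
        QBC (tensState ρ σ) i j) ∧
    overhead (tensState ρ σ) ≤ overhead ρ * overhead σ := by
  have hw₁ := mul_nonneg hc₁ hch₁
  have hw₂ := mul_nonneg hc₂ hch₂
  have hw₃ := mul_nonneg hc₁ hch₂
  have hw₄ := mul_nonneg hc₂ hch₁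
  refine ⟨by ring, fun hc hc' => ⟨?_, ?_⟩, fun i j => ?_, ?_⟩
  · exact (hN₁.tensMap hNh₁).normalizedComb (hN₂.tensMap hNh₂) hw₁ hw₂ hc
  · exact (hN₁.tensMap hNh₂).normalizedComb (hN₂.tensMap hNh₁) hw₃ hw₄ hc'
  · rw [add_smul_div_add_smul_div hw₁ hw₂, add_smul_div_add_smul_div hw₃ hw₄]
    exact tensMap_recovery ρ σ hN₁.1 hN₂.1 hNh₁.1 hNh₂.1 hrecρ hrecσ i j
  · exact Real.sInf_le_sInf_mul_sInf
      ⟨_, c₁, c₂, N₁, N₂, hc₁, hc₂, hN₁, hN₂, hrecρ, rfl⟩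
      ⟨_, ch₁, ch₂, Nh₁, Nh₂, hch₁, hch₂, hNh₁, hNh₂, hrecσ, rfl⟩
      (fun _ => overheadSet_nonneg ρ) (fun _ => overheadSet_nonneg σ)
      ⟨0, fun _ => overheadSet_nonneg _⟩ (fun _ hs _ ht => mul_mem_overheadSet_tensState ρ σ hs ht)
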